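/- arXiv:1405.5686 — 2 statements merged into one kernel-verified Lean document; each statement's English description precedes it below -/
import Mathlib

section
/- Let (X, μ) be a measure space, 1 ≤ p₀ < p ≤ p₁ ≤ ∞ with 1/p = (1−θ)/p₀ + θ/p₁ for some θ ∈ (0,1), and put 1/p_ε = 1/p + ε(1/p₁ − 1/p₀) for a real ε with 0 < θ + ε < 1. For f ∈ L^p(μ) with f ≠ 0, define R_ε f = (|f| / ‖f‖_p)^{εp(1/p₁ − 1/p₀)} · f (pointwise, with value 0 where f = 0). Then R_ε f ∈ L^{p_ε}(μ) and ‖R_ε f‖_{L^{p_ε}} = ‖f‖_{L^p}. -/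
/-! Pointwise `|R_ε f| = c^{-α} |f|^{1+α}` with `c = ‖f‖_p`, and the relation between the
exponents is exactly `p_ε (1 + α) = p`, so `‖R_ε f‖_{p_ε} = c^{-α} ‖f‖_p^{1+α} = c`. -/

open MeasureTheory ENNReal

theorem interpolation_exponent_pos {p₀ p₁ t q : ℝ} (hp₀ : 0 < p₀) (hp₁ : 0 < p₁)
    (ht₀ : 0 < t) (ht₁ : t < 1) (hq : 1 / q = (1 - t) / p₀ + t / p₁) : 0 < q := by
  have : 0 < 1 / q := by
    rw [hq]
    exact add_pos (div_pos (by linarith) hp₀) (div_pos ht₀ hp₁)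
  exact one_div_pos.mp this

theorem norm_rpow_norm_div_smul {E : Type*} [NormedAddCommGroup E] [NormedSpace ℝ E] {c α : ℝ}
    (hc : 0 ≤ c) (hα : 1 + α ≠ 0) (v : E) :
    ‖((‖v‖ / c) ^ α : ℝ) • v‖ = c ^ (-α) * ‖v‖ ^ (1 + α) := by
  have hv := norm_nonneg v
  rw [norm_smul, Real.norm_of_nonneg (by positivity), Real.div_rpow hv hc,
    Real.rpow_add' hv hα, Real.rpow_one, Real.rpow_neg hc]
  ring

namespace MeasureTheory

variable {X E : Type*} [MeasurableSpace X] {μ : Measure X}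
  [NormedAddCommGroup E] [NormedSpace ℝ E]

theorem eLpNorm_rpow_norm_div_smul (f : X → E) {c α : ℝ} (hc : 0 < c) (hα : 0 < 1 + α)
    (q : ℝ≥0∞) :
    eLpNorm (fun x => ((‖f x‖ / c) ^ α : ℝ) • f x) q μ
      = ENNReal.ofReal c ^ (-α) * eLpNorm f (q * ENNReal.ofReal (1 + α)) μ ^ (1 + α) := by
  have hnorm : eLpNorm (fun x => ((‖f x‖ / c) ^ α : ℝ) • f x) q μ
      = eLpNorm ((c ^ (-α)) • fun x => ‖f x‖ ^ (1 + α)) q μ :=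
    eLpNorm_congr_norm_ae <| Filter.Eventually.of_forall fun x => by
      simp only [Pi.smul_apply, smul_eq_mul, norm_mul, norm_rpow_norm_div_smul hc.le hα.ne',
        Real.norm_of_nonneg (Real.rpow_nonneg hc.le _),
        Real.norm_of_nonneg (Real.rpow_nonneg (norm_nonneg _) _)]
  rw [hnorm, eLpNorm_const_smul, eLpNorm_norm_rpow f hα,
    Real.enorm_of_nonneg (Real.rpow_nonneg hc.le _), ENNReal.ofReal_rpow_of_pos hc]

theorem MemLp.rpow_norm_div_eLpNorm_smul {f : X → E} {p q : ℝ≥0∞} {α : ℝ} (hf : MemLp f p μ)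
    (hf0 : eLpNorm f p μ ≠ 0) (hα : 0 < 1 + α) (hqp : q * ENNReal.ofReal (1 + α) = p) :
    MemLp (fun x => ((‖f x‖ / (eLpNorm f p μ).toReal) ^ α : ℝ) • f x) q μ ∧
      eLpNorm (fun x => ((‖f x‖ / (eLpNorm f p μ).toReal) ^ α : ℝ) • f x) q μ
        = eLpNorm f p μ := by
  have hnorm : eLpNorm (fun x => ((‖f x‖ / (eLpNorm f p μ).toReal) ^ α : ℝ) • f x) q μ
      = eLpNorm f p μ := by
    rw [eLpNorm_rpow_norm_div_smul f (ENNReal.toReal_pos hf0 hf.2.ne) hα, hqp,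
      ENNReal.ofReal_toReal hf.2.ne, ← ENNReal.rpow_add _ _ hf0 hf.2.ne, show -α + (1 + α) = 1 by ring,
      ENNReal.rpow_one]
  have hmeas : AEStronglyMeasurable
      (fun x => ((‖f x‖ / (eLpNorm f p μ).toReal) ^ α : ℝ) • f x) μ :=
    ((hf.1.norm.aemeasurable.div_const _).pow_const α).aestronglyMeasurable.smul hf.1
  exact ⟨⟨hmeas, hnorm.trans_lt hf.2⟩, hnorm⟩

end MeasureTheory

theorem stmt_3_general {X : Type*} [MeasurableSpace X] (μ : Measure X)
    (p₀ p p₁ θ ε pε : ℝ)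
    (hp₀ : 1 ≤ p₀) (hp₀p : p₀ < p) (hpp₁ : p ≤ p₁)
    (hp : 1 / p = (1 - θ) / p₀ + θ / p₁)
    (hθε : 0 < θ + ε) (hθε' : θ + ε < 1)
    (hpε : 1 / pε = 1 / p + ε * (1 / p₁ - 1 / p₀))
    (f : X → ℂ) (hf : MemLp f (ENNReal.ofReal p) μ)
    (hf0 : eLpNorm f (ENNReal.ofReal p) μ ≠ 0) :
    MemLp (fun x => ((‖f x‖ / (eLpNorm f (ENNReal.ofReal p) μ).toReal) ^
        (ε * p * (1 / p₁ - 1 / p₀)) : ℝ) • f x) (ENNReal.ofReal pε) μ ∧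
    eLpNorm (fun x => ((‖f x‖ / (eLpNorm f (ENNReal.ofReal p) μ).toReal) ^
        (ε * p * (1 / p₁ - 1 / p₀)) : ℝ) • f x) (ENNReal.ofReal pε) μ
      = eLpNorm f (ENNReal.ofReal p) μ := by
  have hp_pos : 0 < p := by linarith
  have hpε_pos : 0 < pε :=
    interpolation_exponent_pos (p₀ := p₀) (p₁ := p₁) (t := θ + ε) (by linarith) (by linarith)
      hθε hθε' (by rw [hpε, hp]; ring)
  have hscale : pε * (1 + ε * p * (1 / p₁ - 1 / p₀)) = p := by
    have : 1 / pε * (pε * p) = (1 / p + ε * (1 / p₁ - 1 / p₀)) * (pε * p) := by rw [hpε]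
    field_simp at this ⊢
    linarith
  have hα : 0 < 1 + ε * p * (1 / p₁ - 1 / p₀) :=
    (pos_iff_pos_of_mul_pos (by rwa [hscale])).mp hpε_pos
  exact hf.rpow_norm_div_eLpNorm_smul hf0 hα (by rw [← ENNReal.ofReal_mul hpε_pos.le, hscale])

theorem stmt_3 {X : Type*} [MeasurableSpace X] (μ : Measure X)
    (p₀ p p₁ θ ε pε : ℝ)
    (hp₀ : 1 ≤ p₀) (hp₀p : p₀ < p) (hpp₁ : p ≤ p₁)
    (hθ : θ ∈ Set.Ioo (0:ℝ) 1)
    (hp : 1 / p = (1 - θ) / p₀ + θ / p₁)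
    (hθε : 0 < θ + ε) (hθε' : θ + ε < 1)
    (hpε : 1 / pε = 1 / p + ε * (1 / p₁ - 1 / p₀))
    (f : X → ℂ) (hf : MemLp f (ENNReal.ofReal p) μ)
    (hf0 : eLpNorm f (ENNReal.ofReal p) μ ≠ 0) :
    MemLp (fun x => ((‖f x‖ / (eLpNorm f (ENNReal.ofReal p) μ).toReal) ^
        (ε * p * (1 / p₁ - 1 / p₀)) : ℝ) • f x) (ENNReal.ofReal pε) μ ∧
    eLpNorm (fun x => ((‖f x‖ / (eLpNorm f (ENNReal.ofReal p) μ).toReal) ^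
        (ε * p * (1 / p₁ - 1 / p₀)) : ℝ) • f x) (ENNReal.ofReal pε) μ
      = eLpNorm f (ENNReal.ofReal p) μ :=
  stmt_3_general μ p₀ p p₁ θ ε pε hp₀ hp₀p hpp₁ hp hθε hθε' hpε f hf hf0
end

section
/- Let S = {z ∈ ℂ : 0 < Re z < 1}, let t ∈ (0,1), and let h : closure(S) → ℂ be continuous, bounded by M on closure(S), holomorphic on S, with h(t) = 0. Then for every z ∈ closure(S), |h(z)| ≤ (M / min(t, 1−t)) · |z − t|. In particular, for real ε with 0 < t + ε < 1 one has |h(t+ε)| ≤ (M / min(t, 1−t)) · |ε|. -/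
/-!
The difference quotient `g = dslope h t` is holomorphic on the strip (the singularity at `t` is
removable) and continuous up to its boundary. On the boundary lines `‖z - t‖ ≥ min t (1 - t)`, so
`‖g‖ ≤ M / min t (1 - t)` there; as `g` is bounded, the Phragmén–Lindelöf principle carries this
bound into the strip, and `h z = (z - t) • g z`.
-/

open Set Complex Filter Metric Topology

variable {E : Type*} [NormedAddCommGroup E] [NormedSpace ℂ E]

theorem PhragmenLindelof.vertical_strip_of_bddAbove {a b C : ℝ} {f : ℂ → E} {z : ℂ}
    (hfd : DiffContOnCl ℂ f (re ⁻¹' Ioo a b))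
    (hB : BddAbove ((‖f ·‖) '' (re ⁻¹' Ioo a b)))
    (hle_a : ∀ z : ℂ, z.re = a → ‖f z‖ ≤ C) (hle_b : ∀ z : ℂ, z.re = b → ‖f z‖ ≤ C)
    (hza : a ≤ z.re) (hzb : z.re ≤ b) : ‖f z‖ ≤ C := by
  rcases hza.eq_or_lt with hza | hza
  · exact hle_a z hza.symm
  obtain ⟨B, hB⟩ := hB
  refine PhragmenLindelof.vertical_strip hfd
    ⟨0, div_pos Real.pi_pos (by linarith), 0, ?_⟩ hle_a hle_b hza.le hzb
  refine Asymptotics.IsBigO.of_bound B (eventually_inf_principal.2 (.of_forall fun w hw ↦ ?_))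
  simpa using hB (mem_image_of_mem _ hw)

theorem norm_dslope_le_div_of_norm_le {𝕜 F : Type*} [NontriviallyNormedField 𝕜]
    [NormedAddCommGroup F] [NormedSpace 𝕜 F] {f : 𝕜 → F} {a b : 𝕜} {M r : ℝ}
    (ha : f a = 0) (hb : ‖f b‖ ≤ M) (hr : 0 < r) (hrb : r ≤ ‖b - a‖) :
    ‖dslope f a b‖ ≤ M / r := by
  have hba : b ≠ a := by
    rintro rfl
    simp only [sub_self, norm_zero] at hrb
    linarith
  rw [dslope_of_ne _ hba, slope_def_module, ha, sub_zero, norm_smul, norm_inv, ← div_eq_inv_mul]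
  exact div_le_div₀ ((norm_nonneg _).trans hb) hb hr hrb

namespace Complex

theorem abs_re_sub_le_norm_sub (z w : ℂ) : |z.re - w.re| ≤ ‖z - w‖ := by
  simpa using abs_re_le_norm (z - w)

theorem closedBall_subset_re_preimage_Icc {a b r : ℝ} {w : ℂ} (ha : a + r ≤ w.re)
    (hb : w.re + r ≤ b) : closedBall w r ⊆ re ⁻¹' Icc a b := by
  intro z hz
  have := (abs_le.1 ((abs_re_sub_le_norm_sub z w).trans (mem_closedBall_iff_norm.1 hz)))
  constructor <;> linarith [this.1, this.2]

theorem closure_re_preimage_Ioo {a b : ℝ} (hab : a < b) :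
    closure (re ⁻¹' Ioo a b) = re ⁻¹' Icc a b := by
  rw [closure_preimage_re, closure_Ioo hab.ne]

variable [CompleteSpace E]

theorem norm_dslope_le_of_vertical_strip {a b M : ℝ} {f : ℂ → E} {w z : ℂ}
    (hw : w.re ∈ Ioo a b) (hfc : ContinuousOn f (re ⁻¹' Icc a b))
    (hfd : DifferentiableOn ℂ f (re ⁻¹' Ioo a b)) (hM : ∀ z ∈ re ⁻¹' Icc a b, ‖f z‖ ≤ M)
    (hw0 : f w = 0) (hz : z ∈ re ⁻¹' Icc a b) :
    ‖dslope f w z‖ ≤ M / min (w.re - a) (b - w.re) := by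
  set r := min (w.re - a) (b - w.re)
  have hr : 0 < r := lt_min (sub_pos.2 hw.1) (sub_pos.2 hw.2)
  have hra : a + r ≤ w.re := by linarith [min_le_left (w.re - a) (b - w.re)]
  have hrb : w.re + r ≤ b := by linarith [min_le_right (w.re - a) (b - w.re)]
  have hU : re ⁻¹' Ioo a b ∈ 𝓝 w := (isOpen_Ioo.preimage continuous_re).mem_nhds hw
  have hcl : closure (re ⁻¹' Ioo a b) = re ⁻¹' Icc a b := closure_re_preimage_Ioo (hw.1.trans hw.2)
  have hg : DiffContOnCl ℂ (dslope f w) (re ⁻¹' Ioo a b) := by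
    refine ⟨(differentiableOn_dslope hU).2 hfd, hcl ▸ ?_⟩
    exact (continuousOn_dslope (mem_of_superset hU (preimage_mono Ioo_subset_Icc_self))).2
      ⟨hfc, hfd.differentiableAt hU⟩
  have far : ∀ z ∈ re ⁻¹' Icc a b, r ≤ ‖z - w‖ → ‖dslope f w z‖ ≤ M / r :=
    fun z hz hrz ↦ norm_dslope_le_div_of_norm_le hw0 (hM z hz) hr hrz
  -- Near `w` the difference quotient is bounded by compactness, away from `w` by `far`.
  have hbdd : BddAbove ((‖dslope f w ·‖) '' (re ⁻¹' Ioo a b)) := by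
    obtain ⟨B, hB⟩ := (isCompact_closedBall w r).exists_bound_of_continuousOn
      (hg.continuousOn.mono (hcl ▸ closedBall_subset_re_preimage_Icc hra hrb))
    refine ⟨max B (M / r), forall_mem_image.2 fun z hz ↦ ?_⟩
    rcases le_or_gt r ‖z - w‖ with hrz | hrz
    · exact le_max_of_le_right (far z (preimage_mono Ioo_subset_Icc_self hz) hrz)
    · exact le_max_of_le_left (hB z (mem_closedBall_iff_norm.2 hrz.le))
  refine PhragmenLindelof.vertical_strip_of_bddAbove hg hbdd (fun z hz ↦ far z ?_ ?_)
    (fun z hz ↦ far z ?_ ?_) hz.1 hz.2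
  · simp [hz, (hw.1.trans hw.2).le]
  · linarith [neg_abs_le (z.re - w.re), abs_re_sub_le_norm_sub z w,
      min_le_left (w.re - a) (b - w.re)]
  · simp [hz, (hw.1.trans hw.2).le]
  · linarith [le_abs_self (z.re - w.re), abs_re_sub_le_norm_sub z w,
      min_le_right (w.re - a) (b - w.re)]

theorem norm_le_mul_norm_sub_of_vertical_strip {a b M : ℝ} {f : ℂ → E} {w z : ℂ}
    (hw : w.re ∈ Ioo a b) (hfc : ContinuousOn f (re ⁻¹' Icc a b))
    (hfd : DifferentiableOn ℂ f (re ⁻¹' Ioo a b)) (hM : ∀ z ∈ re ⁻¹' Icc a b, ‖f z‖ ≤ M)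
    (hw0 : f w = 0) (hz : z ∈ re ⁻¹' Icc a b) :
    ‖f z‖ ≤ M / min (w.re - a) (b - w.re) * ‖z - w‖ := by
  have hfz : (z - w) • dslope f w z = f z := by rw [sub_smul_dslope, hw0, sub_zero]
  rw [← hfz, norm_smul, mul_comm _ ‖z - w‖]
  exact mul_le_mul_of_nonneg_left (norm_dslope_le_of_vertical_strip hw hfc hfd hM hw0 hz)
    (norm_nonneg _)

end Complex

theorem stmt_15 (t : ℝ) (ht : t ∈ Set.Ioo (0:ℝ) 1) (M : ℝ) (h : ℂ → ℂ)
    (hc : ContinuousOn h (closure {z : ℂ | 0 < z.re ∧ z.re < 1}))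
    (hbd : ∀ z ∈ closure {z : ℂ | 0 < z.re ∧ z.re < 1}, ‖h z‖ ≤ M)
    (hd : DifferentiableOn ℂ h {z : ℂ | 0 < z.re ∧ z.re < 1})
    (ht0 : h (t : ℂ) = 0) :
    (∀ z ∈ closure {z : ℂ | 0 < z.re ∧ z.re < 1},
      ‖h z‖ ≤ (M / min t (1 - t)) * ‖z - t‖) ∧
    (∀ ε : ℝ, 0 < t + ε → t + ε < 1 →
      ‖h ((t : ℂ) + ε)‖ ≤ (M / min t (1 - t)) * |ε|) := by
  have hstrip : closure {z : ℂ | 0 < z.re ∧ z.re < 1} = re ⁻¹' Icc 0 1 :=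
    closure_re_preimage_Ioo one_pos
  rw [hstrip] at hc hbd ⊢
  have key : ∀ z ∈ re ⁻¹' Icc 0 1, ‖h z‖ ≤ M / min t (1 - t) * ‖z - t‖ := by
    simpa using fun z hz ↦
      norm_le_mul_norm_sub_of_vertical_strip (w := t) (by simpa using ht) hc hd hbd ht0 hz
  refine ⟨key, fun ε h0 h1 ↦ ?_⟩
  simpa using key (t + ε) (by simp [h0.le, h1.le])
end
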